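/- Consider the explicit ExpRB update u_{n+1} = u_n + H φ_1(HJ_n) F(t_n,u_n) + H^2 φ_2(HJ_n) V_n + H ∑_{i=2}^s b_i(HJ_n) D_{ni}, where each b_i(HJ_n) = ∑_{k=1}^{m_i} β_i^{(k)} φ_k(HJ_n) with φ_k(HJ) = (1/H^k)∫_0^H e^{(H−τ)J} τ^{k-1}/(k−1)! dτ. Then u_{n+1} equals the value at τ = H of the exact solution of the linear IVP v'(τ) = J_n v(τ) + q_n(τ), v(0) = u_n, with polynomial forcing q_n(τ) = N_n(t_n,u_n) + (t_n+τ) V_n + ∑_{i=2}^s (∑_{k=1}^{m_i} β_i^{(k)} τ^{k-1}/(H^{k-1}(k−1)!)) D_{ni}, where F(t_n,u_n) = J_n u_n + V_n t_n + N_n(t_n,u_n). -/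

import Mathlib

/-!
Multiplying by the integrating factor `e^{(H-τ)J}` turns the IVP into
`v(H) = uₙ + ∫₀ᴴ e^{(H-τ)J} (J uₙ + q(τ)) dτ`. Since `F = J uₙ + tₙ Vₙ + Nₙ`, the integrand is
`J uₙ + q(τ) = Fₙ + τ Vₙ + ∑ᵢ ∑ₖ β_i^{(k)} H^{1-k} τ^{k-1}/(k-1)! D_{ni}`, and each monomial
`τ^{k-1}/(k-1)!` integrates against `e^{(H-τ)J}` to `H^k φ_k(HJ)`.
-/

open intervalIntegral MeasureTheory NormedSpace

namespace ExpRB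

variable {E : Type*} [NormedAddCommGroup E] [NormedSpace ℝ E] [CompleteSpace E] (J : E →L[ℝ] E)

theorem hasDerivAt_exp_sub_smul (H τ : ℝ) :
    HasDerivAt (fun σ : ℝ => exp ((H - σ) • J)) (-(exp ((H - τ) • J) * J)) τ := by
  simpa [Function.comp_def] using
    (hasDerivAt_exp_smul_const J (H - τ)).scomp τ ((hasDerivAt_id τ).const_sub H)

theorem continuous_exp_sub_smul (H : ℝ) : Continuous fun τ : ℝ => exp ((H - τ) • J) :=
  continuous_iff_continuousAt.2 fun τ => (hasDerivAt_exp_sub_smul J H τ).continuousAt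

theorem intervalIntegrable_exp_sub_smul_apply {f : ℝ → E} (hf : Continuous f) (H a b : ℝ) :
    IntervalIntegrable (fun τ => exp ((H - τ) • J) (f τ)) volume a b :=
  ((continuous_exp_sub_smul J H).clm_apply hf).intervalIntegrable a b

theorem eq_add_integral_exp_of_hasDerivWithinAt {v q : ℝ → E} {H : ℝ} (hH : 0 ≤ H)
    (hq : ContinuousOn q (Set.Icc 0 H))
    (hv : ∀ τ ∈ Set.Icc 0 H, HasDerivWithinAt v (J (v τ) + q τ) (Set.Icc 0 H) τ) :
    v H = v 0 + ∫ τ in 0..H, exp ((H - τ) • J) (J (v 0) + q τ) := by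
  -- `τ ↦ e^{(H-τ)J} (v τ - v 0)` has derivative `e^{(H-τ)J} (J (v 0) + q τ)`.
  have hcont : ContinuousOn (fun τ => exp ((H - τ) • J) (v τ - v 0)) (Set.Icc 0 H) :=
    (continuous_exp_sub_smul J H).continuousOn.clm_apply
      (ContinuousOn.sub (fun τ hτ => (hv τ hτ).continuousWithinAt) continuousOn_const)
  have hderiv : ∀ τ ∈ Set.Ioo 0 H, HasDerivWithinAt (fun τ => exp ((H - τ) • J) (v τ - v 0))
      (exp ((H - τ) • J) (J (v 0) + q τ)) (Set.Ioi τ) τ := by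
    intro τ hτ
    have hvτ : HasDerivAt v (J (v τ) + q τ) τ :=
      (hv τ (Set.Ioo_subset_Icc_self hτ)).hasDerivAt (Icc_mem_nhds hτ.1 hτ.2)
    convert ((hasDerivAt_exp_sub_smul J H τ).clm_apply (hvτ.sub_const (v 0))).hasDerivWithinAt
      using 1
    simp only [map_add, map_sub, neg_apply, mul_apply_eq_comp, sub_neg_eq_add]
    abel
  have hint : IntervalIntegrable (fun τ => exp ((H - τ) • J) (J (v 0) + q τ)) volume 0 H :=
    ((continuous_exp_sub_smul J H).continuousOn.clm_apply
      (continuousOn_const.add hq)).intervalIntegrable_of_Icc hH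
  rw [integral_eq_sub_of_hasDeriv_right_of_le hH hcont hderiv hint]
  simp

theorem integral_exp_apply_add {f g : ℝ → E} (hf : Continuous f) (hg : Continuous g) (H a b : ℝ) :
    ∫ τ in a..b, exp ((H - τ) • J) (f τ + g τ) =
      (∫ τ in a..b, exp ((H - τ) • J) (f τ)) + ∫ τ in a..b, exp ((H - τ) • J) (g τ) := by
  simp only [map_add]
  exact intervalIntegral.integral_add (intervalIntegrable_exp_sub_smul_apply J hf H a b)
    (intervalIntegrable_exp_sub_smul_apply J hg H a b)

theorem integral_exp_apply_sum {ι : Type*} (S : Finset ι) {f : ι → ℝ → E}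
    (hf : ∀ i ∈ S, Continuous (f i)) (H a b : ℝ) :
    ∫ τ in a..b, exp ((H - τ) • J) (∑ i ∈ S, f i τ) =
      ∑ i ∈ S, ∫ τ in a..b, exp ((H - τ) • J) (f i τ) := by
  simp only [map_sum]
  exact intervalIntegral.integral_finsetSum fun i hi =>
    intervalIntegrable_exp_sub_smul_apply J (hf i hi) H a b

noncomputable def phi (H : ℝ) (k : ℕ) : E →L[ℝ] E :=
  (H ^ k)⁻¹ • ∫ τ in 0..H, (τ ^ (k - 1) / (k - 1).factorial) • exp ((H - τ) • J)

theorem pow_smul_phi_apply {H : ℝ} (hH : H ≠ 0) (k : ℕ) (x : E) :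
    H ^ k • phi J H k x =
      ∫ τ in 0..H, exp ((H - τ) • J) ((τ ^ (k - 1) / (k - 1).factorial) • x) := by
  have hint : IntervalIntegrable
      (fun τ : ℝ => (τ ^ (k - 1) / (k - 1).factorial) • exp ((H - τ) • J)) volume 0 H :=
    ((by fun_prop : Continuous fun τ : ℝ => τ ^ (k - 1) / (k - 1).factorial).smul
      (continuous_exp_sub_smul J H)).intervalIntegrable 0 H
  rw [phi, smul_apply, smul_inv_smul₀ (pow_ne_zero k hH),
    ContinuousLinearMap.intervalIntegral_apply hint]
  simp only [smul_apply, map_smul]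

theorem integral_exp_apply_monomial {H : ℝ} (hH : H ≠ 0) {k : ℕ} (hk : 1 ≤ k) (c : ℝ) (x : E) :
    ∫ τ in 0..H, exp ((H - τ) • J) ((c * τ ^ (k - 1) / (H ^ (k - 1) * (k - 1).factorial)) • x) =
      H • c • phi J H k x := by
  have hcoef : ∀ τ : ℝ, c * τ ^ (k - 1) / (H ^ (k - 1) * (k - 1).factorial) =
      c / H ^ (k - 1) * (τ ^ (k - 1) / (k - 1).factorial) := fun τ => mul_div_mul_comm _ _ _ _
  have hpow : H ^ k = H * H ^ (k - 1) := by rw [← pow_succ']; congr 1; omega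
  have hpull : ∀ τ : ℝ,
      exp ((H - τ) • J) ((c * τ ^ (k - 1) / (H ^ (k - 1) * (k - 1).factorial)) • x) =
        (c / H ^ (k - 1)) • exp ((H - τ) • J) ((τ ^ (k - 1) / (k - 1).factorial) • x) := by
    intro τ
    rw [hcoef, mul_smul, map_smul]
  simp_rw [hpull, intervalIntegral.integral_smul, ← pow_smul_phi_apply J hH, smul_smul, hpow]
  congr 1
  field_simp

theorem integral_exp_apply_polynomial_forcing {ι : Type*} {H : ℝ} (hH : H ≠ 0) (F V : E)
    (S : Finset ι) (K : ι → Finset ℕ) (hK : ∀ i ∈ S, ∀ k ∈ K i, 1 ≤ k) (β : ι → ℕ → ℝ)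
    (D : ι → E) :
    ∫ τ in 0..H, exp ((H - τ) • J) (F + τ • V + ∑ i ∈ S,
        (∑ k ∈ K i, β i k * τ ^ (k - 1) / (H ^ (k - 1) * (k - 1).factorial)) • D i) =
      H • phi J H 1 F + H ^ 2 • phi J H 2 V +
        H • ∑ i ∈ S, (∑ k ∈ K i, β i k • phi J H k) (D i) := by
  have hF : ∫ τ in 0..H, exp ((H - τ) • J) F = H • phi J H 1 F := by
    simpa using (pow_smul_phi_apply J hH 1 F).symm
  have hV : ∫ τ in 0..H, exp ((H - τ) • J) (τ • V) = H ^ 2 • phi J H 2 V := by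
    simpa using (pow_smul_phi_apply J hH 2 V).symm
  rw [integral_exp_apply_add J (by fun_prop) (by fun_prop),
    integral_exp_apply_add J continuous_const (by fun_prop),
    integral_exp_apply_sum J S (fun i _ => by fun_prop), hF, hV, Finset.smul_sum]
  congr 1
  refine Finset.sum_congr rfl fun i hi => ?_
  simp_rw [Finset.sum_smul]
  rw [integral_exp_apply_sum J (K i) (fun k _ => by fun_prop)]
  simp only [sum_apply, smul_apply, Finset.smul_sum]
  exact Finset.sum_congr rfl fun k hk => integral_exp_apply_monomial J hH (hK i hi k hk) _ _

end ExpRB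

open ExpRB

/-- Lemma 2.1 (final stage): the explicit ExpRB update
u_{n+1} = u_n + H φ_1(HJ) F_n + H² φ_2(HJ) V_n + H ∑_{i=2}^s b_i(HJ) D_{ni},
with b_i(HJ) = ∑_{k=1}^{m_i} β_i^{(k)} φ_k(HJ), equals the value at τ = H of the exact
solution of v'(τ) = J v(τ) + q_n(τ), v(0) = u_n, where
q_n(τ) = N_n + (t_n+τ) V_n + ∑_{i=2}^s (∑_k β_i^{(k)} τ^{k-1}/(H^{k-1}(k−1)!)) D_{ni}
and N_n = F_n − J u_n − t_n V_n. -/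
theorem expRB_update_is_modified_IVP_solution {E : Type*} [NormedAddCommGroup E]
    [NormedSpace ℝ E] [CompleteSpace E]
    (J : E →L[ℝ] E) (H : ℝ) (hH : 0 < H) (tn : ℝ) (un Vn Fn : E)
    (s : ℕ) (m : ℕ → ℕ) (β : ℕ → ℕ → ℝ) (D : ℕ → E)
    (φ : ℕ → (E →L[ℝ] E))
    (hφ : ∀ k, 1 ≤ k → φ k = (H ^ k)⁻¹ •
      ∫ τ in (0:ℝ)..H, (τ ^ (k - 1) / (Nat.factorial (k - 1))) •
        NormedSpace.exp ((H - τ) • J))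
    (N : E) (hN : N = Fn - J un - tn • Vn)
    (q : ℝ → E)
    (hq : ∀ τ, q τ = N + (tn + τ) • Vn
      + ∑ i ∈ Finset.Icc 2 s,
          (∑ k ∈ Finset.Icc 1 (m i),
              β i k * τ ^ (k - 1) / (H ^ (k - 1) * Nat.factorial (k - 1))) • D i)
    (v : ℝ → E) (hv0 : v 0 = un)
    (hv : ∀ τ ∈ Set.Icc (0:ℝ) H,
      HasDerivWithinAt v (J (v τ) + q τ) (Set.Icc (0:ℝ) H) τ) :
    v H = un + H • (φ 1) Fn + (H ^ 2) • (φ 2) Vn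
      + H • ∑ i ∈ Finset.Icc 2 s,
          (∑ k ∈ Finset.Icc 1 (m i), β i k • φ k) (D i) := by
  have hφ_phi : ∀ k, 1 ≤ k → φ k = phi J H k := hφ
  have hb : ∀ i, ∑ k ∈ Finset.Icc 1 (m i), β i k • φ k =
      ∑ k ∈ Finset.Icc 1 (m i), β i k • phi J H k :=
    fun i => Finset.sum_congr rfl fun k hk => by rw [hφ_phi k (Finset.mem_Icc.1 hk).1]
  have hq_cont : Continuous q := by rw [funext hq]; fun_prop
  have hforcing : ∀ τ, J un + q τ = Fn + τ • Vn + ∑ i ∈ Finset.Icc 2 s,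
      (∑ k ∈ Finset.Icc 1 (m i),
        β i k * τ ^ (k - 1) / (H ^ (k - 1) * Nat.factorial (k - 1))) • D i := by
    intro τ
    rw [hq, hN, add_smul]
    abel
  rw [eq_add_integral_exp_of_hasDerivWithinAt J hH.le hq_cont.continuousOn hv, hv0]
  simp_rw [hforcing]
  rw [integral_exp_apply_polynomial_forcing J hH.ne' _ _ _ _
      fun i _ k hk => (Finset.mem_Icc.1 hk).1,
    hφ_phi 1 le_rfl, hφ_phi 2 one_le_two]
  simp only [hb, add_assoc]
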